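/- Let m ≥ 0 and let G be a connected graph on n ≥ 2m+2 vertices that has no matching of size m+1. Then there exists a vertex u of G such that the graph G − u (obtained by deleting u) has no matching of size m. -/

import Mathlib

/-!
This is Gallai's lemma. Suppose every vertex is missed by some maximum matching (of size `m`).
Among all maximum matchings `M` and pairs `u ≠ v` of `M`-unmatched vertices, choose one with
`dist u v` minimal. Then `u`, `v` are not adjacent, as `M` would augment, so the neighbour `w` of
`u` on a shortest `u`-`v` path is covered by `M`; let `N` be a maximum matching missing `w`. The
`M`-`N` alternating path from `w` cannot augment `N`, so switching `M` along it yields a maximum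
matching missing `w` and one of `u`, `v`, which are both closer to `w` than `u` is to `v`. Hence
every maximum matching misses at most one vertex, and the graph has at most `2m + 1` vertices.
-/

open SimpleGraph

variable {V : Type*} {k : ℕ}

/-- The subgraph of `G` spanned by the edges of colour `ℓ`. -/
def colourGraph (G : SimpleGraph V) (χ : Sym2 V → Fin k) (ℓ : Fin k) : SimpleGraph V where
  Adj u v := G.Adj u v ∧ χ s(u, v) = ℓ
  symm := by
    constructor
    intro u v h
    exact ⟨h.1.symm, by rw [Sym2.eq_swap]; exact h.2⟩
  loopless := by
    constructor
    intro u h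
    exact G.loopless.irrefl u h.1

/-- `M` is a matching in `H`: its pairs are edges of `H` and are pairwise vertex-disjoint. -/
def IsMatchingSet (H : SimpleGraph V) (M : Finset (V × V)) : Prop :=
  (∀ e ∈ M, H.Adj e.1 e.2) ∧
  (∀ e ∈ M, ∀ e' ∈ M, e ≠ e' →
    e.1 ≠ e'.1 ∧ e.1 ≠ e'.2 ∧ e.2 ≠ e'.1 ∧ e.2 ≠ e'.2)

/-- `M` is a connected matching in `H`: a matching contained in one component of `H`. -/
def IsConnMatching (H : SimpleGraph V) (M : Finset (V × V)) : Prop :=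
  IsMatchingSet H M ∧ ∀ e ∈ M, ∀ e' ∈ M, H.Reachable e.1 e'.1

/-- A piece of a 2-matching: a list of vertices forming either an edge or an odd cycle of `H`. -/
def IsTwoMatchPiece (H : SimpleGraph V) (l : List V) : Prop :=
  2 ≤ l.length ∧ (l.length = 2 ∨ Odd l.length) ∧ l.Nodup ∧ l.Chain' H.Adj ∧
    ∀ (h : l ≠ []), H.Adj (l.getLast h) (l.head h)

/-- A 2-matching in `H`: a collection of pairwise vertex-disjoint edges and odd cycles. -/
def IsTwoMatching (H : SimpleGraph V) (P : List (List V)) : Prop :=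
  (∀ l ∈ P, IsTwoMatchPiece H l) ∧
    P.Pairwise (fun l₁ l₂ => ∀ v ∈ l₁, v ∉ l₂)

/-- The order of a 2-matching: the number of vertices it covers. -/
def twoMatchOrder (P : List (List V)) : ℕ := (P.map List.length).sum

/-- A connected 2-matching: a 2-matching contained in one component of `H`. -/
def IsConnTwoMatching (H : SimpleGraph V) (P : List (List V)) : Prop :=
  IsTwoMatching H P ∧ ∀ l ∈ P, ∀ v ∈ l, ∀ l' ∈ P, ∀ v' ∈ l', H.Reachable v v'

/-- The component of `H` containing the matching `M` is non-bipartite (contains an odd cycle). -/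
def MatchingInNonBipComponent (H : SimpleGraph V) (M : Finset (V × V)) : Prop :=
  ∃ (w : V) (p : H.Walk w w), p.IsCycle ∧ Odd p.length ∧ ∀ e ∈ M, H.Reachable e.1 w

/-- The component of `H` containing the 2-matching `P` is non-bipartite. -/
def TwoMatchingInNonBipComponent (H : SimpleGraph V) (P : List (List V)) : Prop :=
  ∃ (w : V) (p : H.Walk w w), p.IsCycle ∧ Odd p.length ∧ ∀ l ∈ P, ∀ v ∈ l, H.Reachable v w

/-- `H` contains a cycle of length `t`. -/
def HasCycleLen (H : SimpleGraph V) (t : ℕ) : Prop :=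
  ∃ (w : V) (p : H.Walk w w), p.IsCycle ∧ p.length = t

/-- `H` contains a path on `n` vertices. -/
def HasPathOn (H : SimpleGraph V) (n : ℕ) : Prop :=
  ∃ (u v : V) (p : H.Walk u v), p.IsPath ∧ p.length + 1 = n

/-- The blow-up `F(m₁, …, m_s)` of a graph `F` on `[s]`, possibly with loops, where vertex `i`
is replaced by `m i` vertices. -/
def blowup {s : ℕ} (F : Fin s → Fin s → Prop) (hF : Symmetric F) (m : Fin s → ℕ) :
    SimpleGraph ((i : Fin s) × Fin (m i)) where
  Adj x y := x ≠ y ∧ F x.1 y.1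
  symm := by
    constructor
    intro x y h
    exact ⟨h.1.symm, hF h.2⟩
  loopless := by
    constructor
    intro x h
    exact h.1 rfl

/-- The largest even natural number which is at most `x`. -/
noncomputable def evenFloor (x : ℝ) : ℕ := 2 * ⌊x / 2⌋₊

/-- The largest odd natural number which is at most `x` (for `x ≥ 1`). -/
noncomputable def oddFloor (x : ℝ) : ℕ := 2 * ⌊(x - 1) / 2⌋₊ + 1

open Finset

section Matchings

variable {G : SimpleGraph V} {M N : Finset (V × V)} {a b t v : V}

lemma IsMatchingSet.subset (hM : IsMatchingSet G M) (h : N ⊆ M) : IsMatchingSet G N :=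
  ⟨fun e he => hM.1 e (h he), fun e he e' he' hne => hM.2 e (h he) e' (h he') hne⟩

lemma IsMatchingSet.card_le_of_forall_card_ne {m : ℕ}
    (hno : ∀ M, IsMatchingSet G M → #M ≠ m + 1) (hM : IsMatchingSet G M) : #M ≤ m := by
  by_contra! h
  obtain ⟨N, hNM, hN⟩ := exists_subset_card_eq (show m + 1 ≤ #M by omega)
  exact hno N (hM.subset hNM) hN

variable [DecidableEq V]

def matchedVerts (M : Finset (V × V)) : Finset V := M.image Prod.fst ∪ M.image Prod.snd

lemma mem_matchedVerts : v ∈ matchedVerts M ↔ ∃ e ∈ M, e.1 = v ∨ e.2 = v := by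
  simp only [matchedVerts, mem_union, mem_image]
  aesop

lemma card_matchedVerts_le (M : Finset (V × V)) : #(matchedVerts M) ≤ 2 * #M := by
  have := card_image_le (s := M) (f := Prod.fst)
  have := card_image_le (s := M) (f := Prod.snd)
  have := card_union_le (M.image Prod.fst) (M.image Prod.snd)
  unfold matchedVerts
  omega

lemma matchedVerts_insert :
    matchedVerts (insert (a, b) M) = insert a (insert b (matchedVerts M)) := by
  ext v
  simp only [mem_matchedVerts, mem_insert, exists_eq_or_imp]
  grind

lemma card_insert_of_fst_notMem_matchedVerts (ha : a ∉ matchedVerts M) :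
    #(insert (a, b) M) = #M + 1 :=
  card_insert_of_notMem fun h => ha (mem_matchedVerts.mpr ⟨_, h, Or.inl rfl⟩)

lemma IsMatchingSet.insert_of_adj (hM : IsMatchingSet G M) (hab : G.Adj a b)
    (ha : a ∉ matchedVerts M) (hb : b ∉ matchedVerts M) : IsMatchingSet G (insert (a, b) M) := by
  have hfree : ∀ e ∈ M, e.1 ≠ a ∧ e.1 ≠ b ∧ e.2 ≠ a ∧ e.2 ≠ b := fun e he => by
    simp only [mem_matchedVerts, not_exists, not_and, not_or] at ha hb
    exact ⟨(ha e he).1, (hb e he).1, (ha e he).2, (hb e he).2⟩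
  refine ⟨?_, ?_⟩ <;> simp only [mem_insert, forall_eq_or_imp]
  · exact ⟨hab, hM.1⟩
  · refine ⟨⟨fun h => absurd rfl h, fun e he _ => ?_⟩, fun e he => ⟨fun _ => ?_, hM.2 e he⟩⟩ <;>
      grind [hfree e he]

lemma IsMatchingSet.matchedVerts_erase (hM : IsMatchingSet G M) {e : V × V} (he : e ∈ M) :
    matchedVerts (M.erase e) = ((matchedVerts M).erase e.1).erase e.2 := by
  ext v
  simp only [mem_matchedVerts, mem_erase]
  constructor
  · rintro ⟨e', ⟨hne, he'⟩, hv⟩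
    obtain ⟨h1, h2, h3, h4⟩ := hM.2 e' he' e he hne
    refine ⟨?_, ?_, e', he', hv⟩ <;> rintro rfl <;> tauto
  · rintro ⟨hv2, hv1, e', he', hv⟩
    exact ⟨e', ⟨by rintro rfl; tauto, he'⟩, hv⟩

lemma IsMatchingSet.exists_erase_of_mem_matchedVerts (hM : IsMatchingSet G M)
    (ht : t ∈ matchedVerts M) :
    ∃ b, G.Adj t b ∧ b ∈ matchedVerts M ∧ ∃ M₁, IsMatchingSet G M₁ ∧ #M₁ + 1 = #M ∧
      matchedVerts M₁ = ((matchedVerts M).erase t).erase b := by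
  obtain ⟨⟨x, y⟩, he, hv | hv⟩ := mem_matchedVerts.mp ht <;> dsimp only at hv <;> subst hv
  · exact ⟨y, hM.1 _ he, mem_matchedVerts.mpr ⟨_, he, Or.inr rfl⟩, M.erase _,
      hM.subset (erase_subset _ _), card_erase_add_one he, hM.matchedVerts_erase he⟩
  · refine ⟨x, (hM.1 _ he).symm, mem_matchedVerts.mpr ⟨_, he, Or.inl rfl⟩, M.erase _,
      hM.subset (erase_subset _ _), card_erase_add_one he, ?_⟩
    rw [hM.matchedVerts_erase he, erase_right_comm]

/-- Follow the `M`-`N` alternating path from `t`: either it ends in an `N`-augmenting path, or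
switching `M` along it frees `t` at the cost of covering the far end `x` of the path. -/
theorem IsMatchingSet.exists_augment_or_exchange (hM : IsMatchingSet G M)
    (hN : IsMatchingSet G N) (htM : t ∈ matchedVerts M) (htN : t ∉ matchedVerts N) :
    (∃ P, IsMatchingSet G P ∧ #P = #N + 1 ∧ matchedVerts P ⊆ matchedVerts M ∪ matchedVerts N) ∨
    ∃ M' x, IsMatchingSet G M' ∧ #M' = #M ∧ x ∈ matchedVerts N ∧
      matchedVerts M' ⊆ insert x ((matchedVerts M).erase t) := by
  obtain ⟨n, hn⟩ : ∃ n, #M = n := ⟨_, rfl⟩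
  induction n generalizing M N t with
  | zero =>
    obtain ⟨e, he, -⟩ := mem_matchedVerts.mp htM
    exact absurd hn (card_ne_zero_of_mem he)
  | succ n ih =>
    obtain ⟨b, htb, hbM, M₁, hM₁, hcardM₁, hVM₁⟩ := hM.exists_erase_of_mem_matchedVerts htM
    by_cases hbN : b ∉ matchedVerts N
    · refine Or.inl ⟨_, hN.insert_of_adj htb htN hbN,
        card_insert_of_fst_notMem_matchedVerts htN, ?_⟩
      rw [matchedVerts_insert]
      grind
    obtain ⟨c, hbc, hcN, N₁, hN₁, hcardN₁, hVN₁⟩ :=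
      hN.exists_erase_of_mem_matchedVerts (not_not.mp hbN)
    have hbM₁ : b ∉ matchedVerts M₁ := by simp [hVM₁]
    by_cases hcM : c ∉ matchedVerts M
    · have hcM₁ : c ∉ matchedVerts M₁ := by simp [hVM₁, hcM]
      refine Or.inr ⟨_, c, hM₁.insert_of_adj hbc hbM₁ hcM₁,
        by rw [card_insert_of_fst_notMem_matchedVerts hbM₁]; omega, hcN, ?_⟩
      rw [matchedVerts_insert, hVM₁]
      grind
    have hcM₁ : c ∈ matchedVerts M₁ := by grind [hbc.ne']
    have hcN₁ : c ∉ matchedVerts N₁ := by simp [hVN₁]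
    rcases ih hM₁ hN₁ hcM₁ hcN₁ (by omega) with
      ⟨P, hP, hPc, hPV⟩ | ⟨M₂, x, hM₂, hM₂c, hxN₁, hM₂V⟩
    · have htP : t ∉ matchedVerts P := fun h => by grind
      have hbP : b ∉ matchedVerts P := fun h => by grind
      refine Or.inl ⟨_, hP.insert_of_adj htb htP hbP,
        by rw [card_insert_of_fst_notMem_matchedVerts htP]; omega, ?_⟩
      rw [hVM₁, hVN₁] at hPV
      rw [matchedVerts_insert, insert_subset_iff, insert_subset_iff]
      refine ⟨mem_union_left _ htM, mem_union_left _ hbM, hPV.trans ?_⟩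
      gcongr <;> exact (erase_subset _ _).trans (erase_subset _ _)
    · have hbM₂ : b ∉ matchedVerts M₂ := fun h => by grind
      have hcM₂ : c ∉ matchedVerts M₂ := fun h => by grind
      refine Or.inr ⟨_, x, hM₂.insert_of_adj hbc hbM₂ hcM₂,
        by rw [card_insert_of_fst_notMem_matchedVerts hbM₂]; omega, by grind, ?_⟩
      rw [hVM₁] at hM₂V
      rw [matchedVerts_insert, insert_subset_iff, insert_subset_iff]
      refine ⟨by grind, by grind, hM₂V.trans ?_⟩
      gcongr
      exact (erase_subset _ _).trans (erase_subset _ _)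

end Matchings

lemma SimpleGraph.Connected.exists_adj_dist_lt {G : SimpleGraph V} (hG : G.Connected) {u v : V}
    (huv : u ≠ v) : ∃ w, G.Adj u w ∧ G.dist w v < G.dist u v := by
  obtain ⟨p, hp⟩ := hG.exists_walk_length_eq_dist u v
  cases p with
  | nil => exact absurd rfl huv
  | cons hadj q =>
    refine ⟨_, hadj, ?_⟩
    have := dist_le q
    rw [Walk.length_cons] at hp
    omega

section Gallai

variable [DecidableEq V] {G : SimpleGraph V} {M : Finset (V × V)} {m : ℕ}

theorem SimpleGraph.Connected.eq_of_notMem_matchedVerts (hG : G.Connected)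
    (hmax : ∀ P, IsMatchingSet G P → #P ≤ m)
    (hmissed : ∀ w, ∃ N, IsMatchingSet G N ∧ #N = m ∧ w ∉ matchedVerts N)
    (hM : IsMatchingSet G M) (hMc : #M = m) {u v : V}
    (hu : u ∉ matchedVerts M) (hv : v ∉ matchedVerts M) : u = v := by
  induction hd : G.dist u v using Nat.strong_induction_on generalizing M u v with
  | _ d ih =>
  by_contra huv
  have hnadj : ¬G.Adj u v := fun h => by
    have := hmax _ (hM.insert_of_adj h hu hv)
    rw [card_insert_of_fst_notMem_matchedVerts hu] at this
    omega
  obtain ⟨w, huw, hwv⟩ := hG.exists_adj_dist_lt huv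
  have huw_lt : G.dist u w < d := by
    rw [dist_eq_one_iff_adj.mpr huw, ← hd]
    exact hG.one_lt_dist_of_ne_of_not_adj huv hnadj
  have hwM : w ∈ matchedVerts M := by
    by_contra h
    exact huw.ne (ih _ huw_lt hM hMc hu h rfl)
  obtain ⟨N, hN, hNc, hwN⟩ := hmissed w
  rcases hM.exists_augment_or_exchange hN hwM hwN with
    ⟨P, hP, hPc, -⟩ | ⟨M', x, hM', hM'c, hxN, hM'V⟩
  · have := hmax P hP
    omega
  have hwM' : w ∉ matchedVerts M' := fun h => by grind
  by_cases hxu : x = u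
  · have hvM' : v ∉ matchedVerts M' := fun h => by grind
    have hwv' : w = v := ih _ (hd ▸ hwv) hM' (hM'c.trans hMc) hwM' hvM' rfl
    exact hnadj (hwv' ▸ huw)
  · have huM' : u ∉ matchedVerts M' := fun h => by grind
    exact huw.ne' (ih _ (by rwa [dist_comm]) hM' (hM'c.trans hMc) hwM' huM' rfl)

theorem SimpleGraph.Connected.card_le_of_forall_exists_notMem_matchedVerts [Fintype V]
    (hG : G.Connected) (hmax : ∀ P, IsMatchingSet G P → #P ≤ m)
    (hmissed : ∀ w, ∃ N, IsMatchingSet G N ∧ #N = m ∧ w ∉ matchedVerts N) :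
    Fintype.card V ≤ 2 * m + 1 := by
  obtain ⟨w⟩ := hG.nonempty
  obtain ⟨M, hM, hMc, -⟩ := hmissed w
  have hfree : #(matchedVerts M)ᶜ ≤ 1 := card_le_one.mpr fun u hu v hv =>
    hG.eq_of_notMem_matchedVerts hmax hmissed hM hMc (mem_compl.mp hu) (mem_compl.mp hv)
  have := card_matchedVerts_le M
  have := card_le_univ (matchedVerts M)
  rw [card_compl] at hfree
  omega

end Gallai

section Induce

variable {G : SimpleGraph V} {s : Set V} {M : Finset (s × s)}

def subtypePairEmb (s : Set V) : s × s ↪ V × V :=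
  (Function.Embedding.subtype _).prodMap (Function.Embedding.subtype _)

lemma IsMatchingSet.map_induce (hM : IsMatchingSet (G.induce s) M) :
    IsMatchingSet G (M.map (subtypePairEmb s)) := by
  refine ⟨fun e he => ?_, fun e he e' he' hne => ?_⟩
  · obtain ⟨f, hf, rfl⟩ := mem_map.mp he
    exact hM.1 f hf
  · obtain ⟨f, hf, rfl⟩ := mem_map.mp he
    obtain ⟨f', hf', rfl⟩ := mem_map.mp he'
    have := hM.2 f hf f' hf' (by rintro rfl; exact hne rfl)
    simpa [subtypePairEmb, Subtype.ext_iff] using this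

lemma mem_of_mem_matchedVerts_map_subtype [DecidableEq V] {v : V}
    (hv : v ∈ matchedVerts (M.map (subtypePairEmb s))) : v ∈ s := by
  obtain ⟨e, he, hv⟩ := mem_matchedVerts.mp hv
  obtain ⟨f, -, rfl⟩ := mem_map.mp he
  rcases hv with rfl | rfl
  exacts [f.1.2, f.2.2]

end Induce

/-- Corollary `cor:ge-remove-vx`: a connected graph on at least `2m+2`
vertices with no matching of size `m+1` has a vertex whose removal leaves no matching of
size `m`. -/
theorem stmt_11 {V : Type*} [Fintype V] (m : ℕ) (G : SimpleGraph V)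
    (hconn : G.Connected) (hcard : 2 * m + 2 ≤ Fintype.card V)
    (hno : ∀ M : Finset (V × V), IsMatchingSet G M → M.card ≠ m + 1) :
    ∃ u : V, ∀ M : Finset (↥{v | v ≠ u} × ↥{v | v ≠ u}),
      IsMatchingSet (G.induce {v | v ≠ u}) M → M.card ≠ m := by
  classical
  by_contra! hcover
  have hmissed : ∀ w, ∃ N, IsMatchingSet G N ∧ #N = m ∧ w ∉ matchedVerts N := fun w => by
    obtain ⟨M, hM, hMc⟩ := hcover w
    exact ⟨_, hM.map_induce, by rw [card_map, hMc],
      fun h => mem_of_mem_matchedVerts_map_subtype h rfl⟩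
  have := hconn.card_le_of_forall_exists_notMem_matchedVerts
    (fun P hP => hP.card_le_of_forall_card_ne hno) hmissed
  omega
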